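/- Let X and Y be complete separable metric spaces, let p : X → Y be a Borel measurable map, and let μ, ν be Borel probability measures on X with ν absolutely continuous with respect to μ. Then the pushforward p_*ν is absolutely continuous with respect to p_*μ, and S_{N', p_*μ}(p_*ν) ≤ S_{N', μ}(ν) for every N' < 0. -/

import Mathlib

/-!
The density of `p_*ν` with respect to `p_*μ`, pulled back along `p`, is the conditional
expectation of `ρ = dν/dμ` given `p`. Since `t ↦ t ^ (1 - 1/N')` is convex on `[0, ∞)` for
`N' < 0`, the conditional Jensen inequality bounds the entropy of `p_*ν` by that of `ν`.
-/

/-- A bundled mm-space: a complete separable metric space with a Borel probability measure. -/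
structure MMSpace where
  X : Type
  [metric : MetricSpace X]
  [cpl : CompleteSpace X]
  [sep : TopologicalSpace.SeparableSpace X]
  [mble : MeasurableSpace X]
  [borel : BorelSpace X]
  μ : MeasureTheory.Measure X
  [prob : MeasureTheory.IsProbabilityMeasure μ]

attribute [instance] MMSpace.metric MMSpace.cpl MMSpace.sep MMSpace.mble MMSpace.borel MMSpace.prob

open MeasureTheory ENNReal Filter Topology Set

noncomputable section

/-- A coupling of two measures on `X` is a measure on `X × X` whose marginals are the
given measures. -/
def IsCoupling {X : Type*} [MeasurableSpace X] (π : Measure (X × X)) (μ ν : Measure X) : Prop :=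
  π.map Prod.fst = μ ∧ π.map Prod.snd = ν

/-- A measure has finite second moment if `∫ d(x,x₀)² dμ < ∞` for some base point. -/
def HasFiniteSecondMoment {X : Type*} [PseudoMetricSpace X] [MeasurableSpace X]
    (μ : Measure X) : Prop :=
  ∃ x₀ : X, ∫⁻ x, ENNReal.ofReal (dist x x₀) ^ 2 ∂μ < ∞

/-- The square-root of the quadratic transport cost of a coupling. -/
def cost2 {X : Type*} [PseudoMetricSpace X] [MeasurableSpace X] (π : Measure (X × X)) : ℝ≥0∞ :=
  (∫⁻ p, ENNReal.ofReal (dist p.1 p.2) ^ 2 ∂π) ^ (1 / 2 : ℝ)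

/-- The 2-Wasserstein distance (valued in `[0,∞]`). -/
def W2 {X : Type*} [PseudoMetricSpace X] [MeasurableSpace X] (μ ν : Measure X) : ℝ≥0∞ :=
  ⨅ (π : Measure (X × X)) (_ : IsCoupling π μ ν), cost2 π

/-- A coupling is optimal if it attains the 2-Wasserstein distance. -/
def IsOptimalCoupling {X : Type*} [PseudoMetricSpace X] [MeasurableSpace X]
    (π : Measure (X × X)) (μ ν : Measure X) : Prop :=
  IsCoupling π μ ν ∧ cost2 π = W2 μ ν

open Classical in
/-- The Rényi entropy `S_{N',μ}(ν) = ∫ ρ^{1-1/N'} dμ` if `ν = ρμ ≪ μ`, and `∞` otherwise. -/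
def renyiEntropy {X : Type*} [MeasurableSpace X] (N' : ℝ) (μ ν : Measure X) : ℝ≥0∞ :=
  if ν ≪ μ then ∫⁻ x, (ν.rnDeriv μ x) ^ (1 - 1 / N') ∂μ else ∞

/-- Weak convergence of a sequence of measures: convergence of integrals of all bounded
continuous functions. -/
def WeakConv {X : Type*} [TopologicalSpace X] [MeasurableSpace X]
    (μs : ℕ → Measure X) (μ : Measure X) : Prop :=
  ∀ f : BoundedContinuousFunction X ℝ,
    Tendsto (fun n => ∫ x, f x ∂(μs n)) atTop (𝓝 (∫ x, f x ∂μ))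

/-- Tightness of a sequence of measures. -/
def IsTightSeq {X : Type*} [TopologicalSpace X] [MeasurableSpace X]
    (μs : ℕ → Measure X) : Prop :=
  ∀ ε : ℝ, 0 < ε → ∃ K : Set X, IsCompact K ∧ ∀ n, μs n Kᶜ < ENNReal.ofReal ε

/-- The function `s_κ`, with the convention `s_κ(0) = 1`. -/
def sKappa (κ θ : ℝ) : ℝ :=
  if θ = 0 then 1
  else if 0 < κ then Real.sin (Real.sqrt κ * θ) / (Real.sqrt κ * θ)
  else if κ < 0 then Real.sinh (Real.sqrt (-κ) * θ) / (Real.sqrt (-κ) * θ)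
  else 1

/-- `ω_κ = π/√κ` for `κ > 0` and `∞` otherwise. -/
def omegaKappa (κ : ℝ) : ℝ≥0∞ :=
  if 0 < κ then ENNReal.ofReal (Real.pi / Real.sqrt κ) else ∞

/-- The coefficient `τ_{K,N}^{(t)}(θ)`, valued in `[0,∞]`. -/
def tauCoeff (K N t θ : ℝ) : ℝ≥0∞ :=
  if ENNReal.ofReal θ < omegaKappa (K / (N - 1)) then
    ENNReal.ofReal (t * (sKappa (K / (N - 1)) (t * θ) / sKappa (K / (N - 1)) θ) ^ (1 - 1 / N))
  else ∞

/-- The coefficient `σ_κ^{(t)}(θ)`, valued in `[0,∞]`. -/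
def sigmaCoeff (κ t θ : ℝ) : ℝ≥0∞ :=
  if ENNReal.ofReal θ < omegaKappa κ then
    ENNReal.ofReal (t * sKappa κ (t * θ) / sKappa κ θ)
  else ∞

/-- The curvature-dimension condition `CD(K,N)` for `N < 0`, for a (probability) measure on a
metric space. -/
def IsCDSpace {X : Type*} [MetricSpace X] [MeasurableSpace X] (K N : ℝ) (μX : Measure X) : Prop :=
  ∀ ν₀ ν₁ : Measure X, IsProbabilityMeasure ν₀ → IsProbabilityMeasure ν₁ →
    ν₀ ≪ μX → ν₁ ≪ μX →
    HasFiniteSecondMoment ν₀ → HasFiniteSecondMoment ν₁ →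
    renyiEntropy N μX ν₀ < ∞ → renyiEntropy N μX ν₁ < ∞ →
    ∃ (νt : ℝ → Measure X) (π : Measure (X × X)),
      νt 0 = ν₀ ∧ νt 1 = ν₁ ∧
      (∀ s ∈ Icc (0:ℝ) 1, ∀ t ∈ Icc (0:ℝ) 1,
        W2 (νt s) (νt t) = ENNReal.ofReal |s - t| * W2 ν₀ ν₁) ∧
      IsOptimalCoupling π ν₀ ν₁ ∧
      (∀ t ∈ Icc (0:ℝ) 1, ∀ N' ∈ Ico N (0:ℝ),
        renyiEntropy N' μX ν₀ < ∞ → renyiEntropy N' μX ν₁ < ∞ →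
        renyiEntropy N' μX (νt t) ≤
          (∫⁻ p, tauCoeff K N' (1 - t) (dist p.1 p.2) * (ν₀.rnDeriv μX p.1) ^ (-(1 / N')) ∂π)
          + ∫⁻ p, tauCoeff K N' t (dist p.1 p.2) * (ν₁.rnDeriv μX p.2) ^ (-(1 / N')) ∂π)

/-- The reduced curvature-dimension condition `CD*(K,N)` for `N < 0`. -/
def IsCDStarSpace {X : Type*} [MetricSpace X] [MeasurableSpace X] (K N : ℝ)
    (μX : Measure X) : Prop :=
  ∀ ν₀ ν₁ : Measure X, IsProbabilityMeasure ν₀ → IsProbabilityMeasure ν₁ →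
    ν₀ ≪ μX → ν₁ ≪ μX →
    HasFiniteSecondMoment ν₀ → HasFiniteSecondMoment ν₁ →
    renyiEntropy N μX ν₀ < ∞ → renyiEntropy N μX ν₁ < ∞ →
    ∃ (νt : ℝ → Measure X) (π : Measure (X × X)),
      νt 0 = ν₀ ∧ νt 1 = ν₁ ∧
      (∀ s ∈ Icc (0:ℝ) 1, ∀ t ∈ Icc (0:ℝ) 1,
        W2 (νt s) (νt t) = ENNReal.ofReal |s - t| * W2 ν₀ ν₁) ∧
      IsOptimalCoupling π ν₀ ν₁ ∧
      (∀ t ∈ Icc (0:ℝ) 1, ∀ N' ∈ Ico N (0:ℝ),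
        renyiEntropy N' μX ν₀ < ∞ → renyiEntropy N' μX ν₁ < ∞ →
        renyiEntropy N' μX (νt t) ≤
          (∫⁻ p, sigmaCoeff (K / N') (1 - t) (dist p.1 p.2)
              * (ν₀.rnDeriv μX p.1) ^ (-(1 / N')) ∂π)
          + ∫⁻ p, sigmaCoeff (K / N') t (dist p.1 p.2)
              * (ν₁.rnDeriv μX p.2) ^ (-(1 / N')) ∂π)

/-- The conditioned (normalized restricted) measure `ν_B`. -/
def condProb {X : Type*} [MeasurableSpace X] (ν : Measure X) (B : Set X) : Measure X :=
  (ν B)⁻¹ • ν.restrict B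

/-- Inverse hyperbolic cosine, `arcosh x = log (x + √(x²-1))`. -/
def acosh (x : ℝ) : ℝ := Real.log (x + Real.sqrt (x ^ 2 - 1))

/-- A parameter of an mm-space: a Borel map `[0,1) → X` pushing the Lebesgue measure to `μ`. -/
def IsParameter (A : MMSpace) (φ : ℝ → A.X) : Prop :=
  Measurable φ ∧ Measure.map φ (volume.restrict (Ico (0:ℝ) 1)) = A.μ

/-- The Ky Fan distance between two measurable functions on `[0,1)`. -/
def kyFan (f g : ℝ → ℝ) : ℝ :=
  sInf {ε : ℝ | 0 ≤ ε ∧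
    (volume.restrict (Ico (0:ℝ) 1)) {x | ε < |f x - g x|} ≤ ENNReal.ofReal ε}

/-- The pullback of the 1-Lipschitz functions on an mm-space by a parameter. -/
def pullLip (A : MMSpace) (φ : ℝ → A.X) : Set (ℝ → ℝ) :=
  {h | ∃ f : A.X → ℝ, LipschitzWith 1 f ∧ h = f ∘ φ}

/-- The Hausdorff distance between two sets of functions with respect to the Ky Fan metric. -/
def hausdorffKF (A B : Set (ℝ → ℝ)) : ℝ :=
  max (⨆ f ∈ A, ⨅ g ∈ B, kyFan f g) (⨆ g ∈ B, ⨅ f ∈ A, kyFan f g)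

/-- The observable distance between two mm-spaces. -/
def dconc (A B : MMSpace) : ℝ :=
  sInf {r : ℝ | ∃ φ ψ, IsParameter A φ ∧ IsParameter B ψ ∧
    r = hausdorffKF (pullLip A φ) (pullLip B ψ)}

end

noncomputable section

/-- The smooth approximation `F_a(x) = a⁻¹ log(e^{ax} + e^{-ax})` of `|x|`. -/
def Fa (a x : ℝ) : ℝ := a⁻¹ * Real.log (Real.exp (a * x) + Real.exp (-(a * x)))

/-- A (minimizing, constant-speed) geodesic parametrized by `[0,1]`. -/
def IsGeodOn01 {X : Type*} [PseudoMetricSpace X] (γ : ℝ → X) : Prop :=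
  ∀ s ∈ Set.Icc (0:ℝ) 1, ∀ s' ∈ Set.Icc (0:ℝ) 1,
    dist (γ s) (γ s') = |s - s'| * dist (γ 0) (γ 1)

end

namespace ConvexOn

variable {α β : Type*} {mα : MeasurableSpace α} {mβ : MeasurableSpace β}
  {μ ν : Measure α} [IsFiniteMeasure μ] [IsFiniteMeasure ν] {f : ℝ → ℝ} {g : α → β}

theorem integral_comp_rnDeriv_map_le (hμν : μ ≪ ν) (hg : Measurable g)
    (hf : StronglyMeasurable f) (hf_cvx : ConvexOn ℝ (Ici 0) f)
    (hf_cont : ContinuousWithinAt f (Ici 0) 0)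
    (h_int : Integrable (fun x ↦ f (μ.rnDeriv ν x).toReal) ν) :
    ∫ y, f ((μ.map g).rnDeriv (ν.map g) y).toReal ∂ν.map g ≤
      ∫ x, f (μ.rnDeriv ν x).toReal ∂ν := by
  have h_meas : StronglyMeasurable fun y ↦ f ((μ.map g).rnDeriv (ν.map g) y).toReal := by
    fun_prop
  have h_int_map := hf_cvx.integrable_comp_rnDeriv_map hμν hg hf hf_cont h_int
  rw [integral_map hg.aemeasurable h_meas.aestronglyMeasurable]
  conv_rhs => rw [← integral_condExp hg.comap_le]
  exact integral_mono_ae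
    ((integrable_map_measure h_meas.aestronglyMeasurable hg.aemeasurable).mp h_int_map)
    integrable_condExp (hf_cvx.comp_rnDeriv_map_le hμν hg hf hf_cont h_int)

end ConvexOn

theorem lintegral_rpow_eq_ofReal_integral {α : Type*} [MeasurableSpace α] {μ : Measure α}
    {f : α → ℝ≥0∞} (hf : ∀ᵐ x ∂μ, f x < ∞) {q : ℝ} (hq : 0 ≤ q)
    (h_int : Integrable (fun x ↦ (f x).toReal ^ q) μ) :
    ∫⁻ x, f x ^ q ∂μ = ENNReal.ofReal (∫ x, (f x).toReal ^ q ∂μ) := by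
  rw [ofReal_integral_eq_lintegral_ofReal h_int (ae_of_all _ fun x ↦ by positivity)]
  refine lintegral_congr_ae ?_
  filter_upwards [hf] with x hx
  rw [← ENNReal.ofReal_rpow_of_nonneg ENNReal.toReal_nonneg hq, ENNReal.ofReal_toReal hx.ne]

theorem lintegral_rpow_rnDeriv_map_le {α β : Type*} {mα : MeasurableSpace α}
    {mβ : MeasurableSpace β} {μ ν : Measure α} [IsFiniteMeasure μ] [IsFiniteMeasure ν]
    {g : α → β} (hμν : μ ≪ ν) (hg : Measurable g) {q : ℝ} (hq : 1 ≤ q) :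
    ∫⁻ y, (μ.map g).rnDeriv (ν.map g) y ^ q ∂ν.map g ≤ ∫⁻ x, μ.rnDeriv ν x ^ q ∂ν := by
  by_cases h_top : ∫⁻ x, μ.rnDeriv ν x ^ q ∂ν = ∞
  · exact h_top ▸ le_top
  have h_int : Integrable (fun x ↦ (μ.rnDeriv ν x).toReal ^ q) ν := by
    simp_rw [ENNReal.toReal_rpow]
    exact integrable_toReal_of_lintegral_ne_top (by fun_prop) h_top
  have h_cont : Continuous fun t : ℝ ↦ t ^ q := Real.continuous_rpow_const (by linarith)
  have h_int_map := (convexOn_rpow hq).integrable_comp_rnDeriv_map hμν hg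
    h_cont.measurable.stronglyMeasurable h_cont.continuousWithinAt h_int
  rw [lintegral_rpow_eq_ofReal_integral (Measure.rnDeriv_lt_top _ _) (by linarith) h_int,
    lintegral_rpow_eq_ofReal_integral (Measure.rnDeriv_lt_top _ _) (by linarith) h_int_map]
  exact ENNReal.ofReal_le_ofReal <| (convexOn_rpow hq).integral_comp_rnDeriv_map_le hμν hg
    h_cont.measurable.stronglyMeasurable h_cont.continuousWithinAt h_int

theorem renyiEntropy_of_absolutelyContinuous {X : Type*} [MeasurableSpace X] {μ ν : Measure X}
    (N' : ℝ) (hνμ : ν ≪ μ) :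
    renyiEntropy N' μ ν = ∫⁻ x, ν.rnDeriv μ x ^ (1 - 1 / N') ∂μ :=
  if_pos hνμ

open MeasureTheory Set in
theorem renyiEntropy_map_le_general {X Y : Type*} [MeasurableSpace X] [MeasurableSpace Y]
    (p : X → Y) (hp : Measurable p)
    (μ ν : Measure X) [IsProbabilityMeasure μ] [IsProbabilityMeasure ν] (hac : ν ≪ μ) :
    ν.map p ≪ μ.map p ∧
      ∀ N' : ℝ, N' < 0 → renyiEntropy N' (μ.map p) (ν.map p) ≤ renyiEntropy N' μ ν := by
  have hac_map : ν.map p ≪ μ.map p := hac.map hp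
  refine ⟨hac_map, fun N' hN' ↦ ?_⟩
  have hq : 1 ≤ 1 - 1 / N' := by linarith [one_div_neg.mpr hN']
  rw [renyiEntropy_of_absolutelyContinuous N' hac_map,
    renyiEntropy_of_absolutelyContinuous N' hac]
  exact lintegral_rpow_rnDeriv_map_le hac hp hq

open MeasureTheory Set in
/-- Pushforwards preserve absolute continuity and do not increase the Rényi
entropy (`N' < 0`). -/
theorem renyiEntropy_map_le {X Y : Type*} [MetricSpace X] [CompleteSpace X]
    [TopologicalSpace.SeparableSpace X] [MeasurableSpace X] [BorelSpace X]
    [MetricSpace Y] [CompleteSpace Y] [TopologicalSpace.SeparableSpace Y]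
    [MeasurableSpace Y] [BorelSpace Y]
    (p : X → Y) (hp : Measurable p)
    (μ ν : Measure X) [IsProbabilityMeasure μ] [IsProbabilityMeasure ν] (hac : ν ≪ μ) :
    ν.map p ≪ μ.map p ∧
      ∀ N' : ℝ, N' < 0 → renyiEntropy N' (μ.map p) (ν.map p) ≤ renyiEntropy N' μ ν :=
  renyiEntropy_map_le_general p hp μ ν hac
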